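/- Soundness of the min rule for conjunction: in any (pseudo e)metric space, if r is a sound robustness estimate for A at x and q is a sound robustness estimate for B at x, then min r q is a sound robustness estimate for A ∩ B at x; that is, -(EMetric.infEdist x (A ∩ B)) ≤ (min r q : EReal) and (min r q : EReal) ≤ EMetric.infEdist x (A ∩ B)ᶜ. -/

import Mathlib

open Metric Set
open scoped ENNReal

section

variable {X : Type*} [PseudoEMetricSpace X]

def IsSoundRobustnessEstimate (x : X) (A : Set X) (r : ℝ) : Prop :=
  -(infEDist x A : EReal) ≤ r ∧ (r : EReal) ≤ infEDist x Aᶜ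

lemma Metric.infEDist_compl_inter (x : X) (s t : Set X) :
    infEDist x (s ∩ t)ᶜ = min (infEDist x sᶜ) (infEDist x tᶜ) := by
  rw [compl_inter, infEDist_union]

lemma Metric.max_infEDist_le_infEDist_inter (x : X) (s t : Set X) :
    max (infEDist x s) (infEDist x t) ≤ infEDist x (s ∩ t) :=
  max_le (infEDist_anti inter_subset_left) (infEDist_anti inter_subset_right)

theorem IsSoundRobustnessEstimate.inter {x : X} {A B : Set X} {r q : ℝ}
    (hr : IsSoundRobustnessEstimate x A r) (hq : IsSoundRobustnessEstimate x B q) :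
    IsSoundRobustnessEstimate x (A ∩ B) (min r q) := by
  have coe_min : ((min r q : ℝ) : EReal) = min (r : EReal) q :=
    EReal.coe_strictMono.monotone.map_min
  refine ⟨?_, ?_⟩
  · calc -(infEDist x (A ∩ B) : EReal)
        ≤ -((max (infEDist x A) (infEDist x B) : ℝ≥0∞) : EReal) := by
          rw [EReal.neg_le_neg_iff, EReal.coe_ennreal_le_coe_ennreal_iff]
          exact max_infEDist_le_infEDist_inter x A B
      _ = min (-(infEDist x A : EReal)) (-(infEDist x B : EReal)) := by
          rw [EReal.coe_ennreal_strictMono.monotone.map_max, EReal.min_neg_neg]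
      _ ≤ min (r : EReal) q := min_le_min hr.1 hq.1
      _ = ((min r q : ℝ) : EReal) := coe_min.symm
  · rw [infEDist_compl_inter, EReal.coe_ennreal_strictMono.monotone.map_min, coe_min]
    exact min_le_min hr.2 hq.2

end

theorem min_rule_sound_for_inter {X : Type*} [PseudoEMetricSpace X]
    (x : X) (A B : Set X) (r q : ℝ)
    (hrA₁ : -(EMetric.infEdist x A : EReal) ≤ (r : EReal))
    (hrA₂ : (r : EReal) ≤ (EMetric.infEdist x Aᶜ : EReal))
    (hqB₁ : -(EMetric.infEdist x B : EReal) ≤ (q : EReal))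
    (hqB₂ : (q : EReal) ≤ (EMetric.infEdist x Bᶜ : EReal)) :
    -(EMetric.infEdist x (A ∩ B) : EReal) ≤ ((min r q : ℝ) : EReal) ∧
    ((min r q : ℝ) : EReal) ≤ (EMetric.infEdist x (A ∩ B)ᶜ : EReal) :=
  -- `EMetric.infEdist` is a deprecated alias of `Metric.infEDist`, hence definitionally equal.
  IsSoundRobustnessEstimate.inter ⟨hrA₁, hrA₂⟩ ⟨hqB₁, hqB₂⟩
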